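/- arXiv:1702.00205 — 3 statements merged into one kernel-verified Lean document; each statement's English description precedes it below -/
import Mathlib

section
/- Let G be a finite undirected weighted graph without loops, and let a, b : V(G) → ℝ≥0 satisfy d_G(x) ≥ a(x) + b(x) + 2·W_G(x) for every vertex x ∈ V(G). If there exists a stable pair, i.e. disjoint nonempty subsets A, B ⊆ V(G) with d_A(x) ≥ a(x) for every x ∈ A and d_B(x) ≥ b(x) for every x ∈ B, then there exists a stable partition of V(G), i.e. a partition (A', B') of V(G) into two nonempty sets with A' ∪ B' = V(G), d_{A'}(x) ≥ a(x) for every x ∈ A', and d_{B'}(x) ≥ b(x) for every x ∈ B'. -/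
/-!
Enlarge `B` greedily to a set `C`, keeping it disjoint from `A` and `b`-stable, until no vertex
outside `A ∪ C` can be added. Every such vertex `x` then has `d_C(x) < b(x)`, so
`d_{Cᶜ}(x) = d_G(x) - d_C(x) > d_G(x) - b(x) ≥ a(x)`; vertices of `A` only gain degree when
`A` grows to `Cᶜ`. Hence `(Cᶜ, C)` is a stable partition.
-/

/-- Degree of vertex `x` with respect to the vertex subset `X`:
the sum of weights of edges from `x` to vertices of `X`. -/
def deg {V : Type*} (w : V → V → ℝ) (X : Finset V) (x : V) : ℝ :=
  ∑ y ∈ X, w x y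

/-- `maxW w x` is the maximum weight of an edge of the graph incident to `x`,
loops excluded, i.e. the maximum of `w x y` over all `y ≠ x`. -/
noncomputable def maxW {V : Type*} [Fintype V] [DecidableEq V] [Nontrivial V]
    (w : V → V → ℝ) (x : V) : ℝ :=
  (Finset.univ.erase x).sup'
    (by obtain ⟨y, hy⟩ := exists_ne x
        exact ⟨y, Finset.mem_erase.mpr ⟨hy, Finset.mem_univ y⟩⟩)
    (w x)

open Finset

def IsStable {V : Type*} (w : V → V → ℝ) (f : V → ℝ) (X : Finset V) : Prop :=
  ∀ x ∈ X, f x ≤ deg w X x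

section Degree

variable {V : Type*} {w : V → V → ℝ}

theorem deg_mono (hnonneg : ∀ x y, 0 ≤ w x y) {X Y : Finset V} (hXY : X ⊆ Y) (x : V) :
    deg w X x ≤ deg w Y x :=
  sum_le_sum_of_subset_of_nonneg hXY fun y _ _ => hnonneg x y

theorem deg_compl [Fintype V] [DecidableEq V] (X : Finset V) (x : V) :
    deg w Xᶜ x = deg w univ x - deg w X x := by
  simp only [deg, ← sum_add_sum_compl X (w x)]
  ring

theorem maxW_nonneg [Fintype V] [DecidableEq V] [Nontrivial V]
    (hnonneg : ∀ x y, 0 ≤ w x y) (x : V) : 0 ≤ maxW w x := by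
  obtain ⟨y, hy⟩ := exists_ne x
  exact (hnonneg x y).trans (le_sup' (w x) (mem_erase.mpr ⟨hy, mem_univ y⟩))

end Degree

section Stable

variable {V : Type*} {w : V → V → ℝ} {f : V → ℝ}

theorem IsStable.mono_of_subset (hnonneg : ∀ x y, 0 ≤ w x y) {X Y : Finset V}
    (hX : IsStable w f X) (hXY : X ⊆ Y) (hY : ∀ y ∈ Y, y ∉ X → f y ≤ deg w Y y) :
    IsStable w f Y := fun y hy => by
  by_cases hyX : y ∈ X
  · exact (hX y hyX).trans (deg_mono hnonneg hXY y)
  · exact hY y hy hyX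

theorem IsStable.insert_of_le [DecidableEq V] (hnonneg : ∀ x y, 0 ≤ w x y)
    {X : Finset V} {v : V} (hX : IsStable w f X) (hv : f v ≤ deg w X v) :
    IsStable w f (insert v X) :=
  hX.mono_of_subset hnonneg (subset_insert v X) fun y hy hyX => by
    obtain rfl := (mem_insert.mp hy).resolve_right hyX
    exact hv.trans (deg_mono hnonneg (subset_insert y X) y)

theorem IsStable.exists_saturated [Fintype V] [DecidableEq V] (hnonneg : ∀ x y, 0 ≤ w x y)
    {A B : Finset V} (hB : IsStable w f B) (hAB : Disjoint A B) :
    ∃ C, B ⊆ C ∧ Disjoint A C ∧ IsStable w f C ∧ ∀ v ∉ A, v ∉ C → deg w C v < f v := by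
  classical
  set S := univ.powerset.filter fun C => B ⊆ C ∧ Disjoint A C ∧ IsStable w f C
  have hBS : B ∈ S := by simp [S, hAB, hB]
  obtain ⟨C, hCS, hCmax⟩ := exists_max_image S card ⟨B, hBS⟩
  simp only [S, mem_filter, mem_powerset, subset_univ, true_and] at hCS
  obtain ⟨hBC, hAC, hC⟩ := hCS
  refine ⟨C, hBC, hAC, hC, fun v hvA hvC => lt_of_not_ge fun hv => ?_⟩
  have hins : insert v C ∈ S := by
    simp only [S, mem_filter, mem_powerset, subset_univ, true_and]
    exact ⟨hBC.trans (subset_insert v C), disjoint_insert_right.mpr ⟨hvA, hAC⟩,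
      hC.insert_of_le hnonneg hv⟩
  have := hCmax _ hins
  rw [card_insert_of_notMem hvC] at this
  omega

theorem IsStable.compl_of_saturated [Fintype V] [DecidableEq V] (hnonneg : ∀ x y, 0 ≤ w x y)
    {a b : V → ℝ} (hdeg : ∀ x, a x + b x ≤ deg w univ x) {A C : Finset V}
    (hA : IsStable w a A) (hAC : Disjoint A C)
    (hsat : ∀ v ∉ A, v ∉ C → deg w C v < b v) : IsStable w a Cᶜ := by
  refine hA.mono_of_subset hnonneg (subset_compl_iff_disjoint_right.mpr hAC) fun x hx hxA => ?_
  linarith [hsat x hxA (mem_compl.mp hx), hdeg x, deg_compl (w := w) C x]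

end Stable

theorem stable_pair_to_stable_partition_general
    {V : Type*} [Fintype V] [DecidableEq V] [Nontrivial V]
    (w : V → V → ℝ)
    (hnonneg : ∀ x y, 0 ≤ w x y)
    (a b : V → ℝ)
    (hdeg : ∀ x, a x + b x + 2 * maxW w x ≤ deg w Finset.univ x)
    (A B : Finset V)
    (hA : A.Nonempty) (hB : B.Nonempty) (hAB : Disjoint A B)
    (hstA : ∀ x ∈ A, a x ≤ deg w A x)
    (hstB : ∀ x ∈ B, b x ≤ deg w B x) :
    ∃ A' B' : Finset V, A'.Nonempty ∧ B'.Nonempty ∧ Disjoint A' B' ∧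
      A' ∪ B' = Finset.univ ∧
      (∀ x ∈ A', a x ≤ deg w A' x) ∧ (∀ x ∈ B', b x ≤ deg w B' x) := by
  obtain ⟨C, hBC, hAC, hC, hsat⟩ := IsStable.exists_saturated hnonneg hstB hAB
  have hdeg' : ∀ x, a x + b x ≤ deg w univ x := fun x => by
    linarith [hdeg x, maxW_nonneg hnonneg x]
  refine ⟨Cᶜ, C, hA.mono (subset_compl_iff_disjoint_right.mpr hAC), hB.mono hBC,
    disjoint_compl_left, by rw [union_comm, union_compl],
    IsStable.compl_of_saturated hnonneg hdeg' hstA hAC hsat, hC⟩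

/-- Proposition 1: if there exists a stable pair, then there exists a stable
partition of `V(G)`, too. -/
theorem stable_pair_to_stable_partition
    {V : Type*} [Fintype V] [DecidableEq V] [Nontrivial V]
    (w : V → V → ℝ)
    (hsymm : ∀ x y, w x y = w y x)
    (hnonneg : ∀ x y, 0 ≤ w x y)
    (hloop : ∀ x, w x x = 0)
    (a b : V → ℝ)
    (ha : ∀ x, 0 ≤ a x) (hb : ∀ x, 0 ≤ b x)
    (hdeg : ∀ x, a x + b x + 2 * maxW w x ≤ deg w Finset.univ x)
    (A B : Finset V)
    (hA : A.Nonempty) (hB : B.Nonempty) (hAB : Disjoint A B)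
    (hstA : ∀ x ∈ A, a x ≤ deg w A x)
    (hstB : ∀ x ∈ B, b x ≤ deg w B x) :
    ∃ A' B' : Finset V, A'.Nonempty ∧ B'.Nonempty ∧ Disjoint A' B' ∧
      A' ∪ B' = Finset.univ ∧
      (∀ x ∈ A', a x ≤ deg w A' x) ∧ (∀ x ∈ B', b x ≤ deg w B' x) :=
  stable_pair_to_stable_partition_general w hnonneg a b hdeg A B hA hB hAB hstA hstB
end

section
/- Let G be the complete graph on 9 vertices with all edge weights equal to 1 (so w(x,y) = 1 for all x ≠ y and w(x,x) = 0), and let ε > 0. Set a(x) = b(x) = 3 + ε for every vertex x. Then there is no partition (A, B) of the vertex set into two nonempty disjoint sets covering all vertices such that d_A(x) ≥ a(x) for every x ∈ A and d_B(x) ≥ b(x) for every x ∈ B. (Hence the bound d_G(x) ≥ a(x) + b(x) + 2·W_G(x) in the decomposition theorem is tight, since here d_G(x) = 8 = (3+ε) + (3+ε) + 2 − 2ε.) -/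
theorem deg_complete_of_mem {V : Type*} [DecidableEq V] {X : Finset V} {x : V} (hx : x ∈ X) :
    deg (fun x y => if x = y then 0 else 1) X x = X.card - 1 := by
  simp only [deg, Finset.sum_ite, Finset.filter_eq, Finset.filter_ne, if_pos hx,
    Finset.sum_const_zero, Finset.sum_const, Finset.card_erase_of_mem hx, nsmul_eq_mul, mul_one,
    zero_add]
  rw [Nat.cast_sub (Finset.card_pos.mpr ⟨x, hx⟩), Nat.cast_one]

/-- Tightness example: in `K₉` with unit edge weights (so `d_G(x) = 8` for every
vertex), setting `a(x) = b(x) = 3 + ε` with `ε > 0`, no stable partition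
exists. -/
theorem no_stable_partition_K9 (ε : ℝ) (hε : 0 < ε) :
    ¬ ∃ A B : Finset (Fin 9), A.Nonempty ∧ B.Nonempty ∧ Disjoint A B ∧
      A ∪ B = Finset.univ ∧
      (∀ x ∈ A, (3 : ℝ) + ε ≤ deg (fun x y => if x = y then 0 else 1) A x) ∧
      (∀ x ∈ B, (3 : ℝ) + ε ≤ deg (fun x y => if x = y then 0 else 1) B x) := by
  rintro ⟨A, B, ⟨a, ha⟩, ⟨b, hb⟩, hdisj, hcover, hA, hB⟩
  have hcard : A.card + B.card = 9 := by
    rw [← Finset.card_union_of_disjoint hdisj, hcover, Finset.card_univ, Fintype.card_fin]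
  have four_lt_card {X : Finset (Fin 9)} {x : Fin 9} (hx : x ∈ X)
      (hX : 3 + ε ≤ deg (fun x y => if x = y then 0 else 1) X x) : 4 < X.card := by
    rw [deg_complete_of_mem hx] at hX
    exact_mod_cast (by linarith : (4 : ℝ) < X.card)
  have := four_lt_card ha (hA a ha)
  have := four_lt_card hb (hB b hb)
  omega
end

section
/- Let G be a finite undirected weighted graph without loops, and let a, b : V(G) → ℝ≥0 satisfy d_G(x) ≥ a(x) + b(x) + 2·W_G(x) for every vertex x ∈ V(G). If (A, B) is a meager partition of V(G) (i.e. G(A) is a-meager and G(B) is b-meager), then |A| ≥ 2 and |B| ≥ 2. -/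
/-- The induced subgraph `G(X)` is `f`-meager if every nonempty `H ⊆ X`
contains a vertex `x` with `d_H(x) < f(x) + W_G(x)`. -/
def Meager {V : Type*} [Fintype V] [DecidableEq V] [Nontrivial V]
    (w : V → V → ℝ) (f : V → ℝ) (X : Finset V) : Prop :=
  ∀ H ⊆ X, H.Nonempty → ∃ x ∈ H, deg w H x < f x + maxW w x

open Finset

theorem deg_univ_eq_add_deg_erase {V : Type*} [Fintype V] [DecidableEq V] (w : V → V → ℝ)
    (x y : V) : deg w univ y = w y x + deg w (univ.erase x) y :=
  (add_sum_erase _ _ (mem_univ x)).symm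

section

variable {V : Type*} [Fintype V] [DecidableEq V] [Nontrivial V] (w : V → V → ℝ) {f : V → ℝ}

theorem le_maxW {x y : V} (hyx : y ≠ x) : w x y ≤ maxW w x :=
  le_sup' (w x) (mem_erase.2 ⟨hyx, mem_univ y⟩)

theorem not_meager_univ_erase (hdeg : ∀ y, f y + 2 * maxW w y ≤ deg w univ y) (x : V) :
    ¬ Meager w f (univ.erase x) := by
  intro hm
  obtain ⟨y, hy, hlt⟩ := hm _ subset_rfl (univ_nontrivial.erase_nonempty)
  have hw := le_maxW w (ne_of_mem_erase hy).symm
  linarith [hdeg y, deg_univ_eq_add_deg_erase w x y]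

theorem two_le_card_of_meager_compl (hdeg : ∀ y, f y + 2 * maxW w y ≤ deg w univ y)
    {A B : Finset V} (hA : A.Nonempty) (hAB : Disjoint A B) (hunion : A ∪ B = univ)
    (hmB : Meager w f B) : 2 ≤ A.card := by
  obtain ⟨x, rfl⟩ | hA := hA.exists_eq_singleton_or_nontrivial
  · have hB : B = univ.erase x := by
      rw [← union_sdiff_cancel_left hAB, hunion, sdiff_singleton_eq_erase]
    exact absurd (hB ▸ hmB) (not_meager_univ_erase w hdeg x)
  · exact one_lt_card_iff_nontrivial.2 hA

end

theorem meager_partition_parts_card_ge_two_general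
    {V : Type*} [Fintype V] [DecidableEq V] [Nontrivial V]
    (w : V → V → ℝ)
    (a b : V → ℝ)
    (ha : ∀ x, 0 ≤ a x) (hb : ∀ x, 0 ≤ b x)
    (hdeg : ∀ x, a x + b x + 2 * maxW w x ≤ deg w Finset.univ x)
    (A B : Finset V)
    (hA : A.Nonempty) (hB : B.Nonempty) (hAB : Disjoint A B)
    (hunion : A ∪ B = Finset.univ)
    (hmA : Meager w a A) (hmB : Meager w b B) :
    2 ≤ A.card ∧ 2 ≤ B.card := by
  constructor
  · exact two_le_card_of_meager_compl w (fun x => by linarith [hdeg x, ha x]) hA hAB hunion hmB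
  · exact two_le_card_of_meager_compl w (fun x => by linarith [hdeg x, hb x]) hB hAB.symm
      (union_comm A B ▸ hunion) hmA

/-- In the second case of the proof of Theorem 1: any meager partition `(A,B)`
of `V(G)` satisfies `|A| ≥ 2` and `|B| ≥ 2`. -/
theorem meager_partition_parts_card_ge_two
    {V : Type*} [Fintype V] [DecidableEq V] [Nontrivial V]
    (w : V → V → ℝ)
    (hsymm : ∀ x y, w x y = w y x)
    (hnonneg : ∀ x y, 0 ≤ w x y)
    (hloop : ∀ x, w x x = 0)
    (a b : V → ℝ)
    (ha : ∀ x, 0 ≤ a x) (hb : ∀ x, 0 ≤ b x)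
    (hdeg : ∀ x, a x + b x + 2 * maxW w x ≤ deg w Finset.univ x)
    (A B : Finset V)
    (hA : A.Nonempty) (hB : B.Nonempty) (hAB : Disjoint A B)
    (hunion : A ∪ B = Finset.univ)
    (hmA : Meager w a A) (hmB : Meager w b B) :
    2 ≤ A.card ∧ 2 ≤ B.card :=
  meager_partition_parts_card_ge_two_general w a b ha hb hdeg A B hA hB hAB hunion hmA hmB
end
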